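/- [ℛTxtTdCIndEx_C]_REC ⊊ [TxtTdCIndEx_C]_REC; that is, every class of recursive languages CIndEx_C-learnable by a total computable transductive learner is CIndEx_C-learnable by a partial computable transductive learner, and there exists a class of recursive languages CIndEx_C-learnable by a partial computable transductive learner but by no total computable transductive learner. -/

import Mathlib

namespace InductiveInference

/-- `φ_e` : the `e`-th partial computable function, via the standard numbering
of `Nat.Partrec.Code`. -/
def phi (e : ℕ) : ℕ →. ℕ := (Denumerable.ofNat Nat.Partrec.Code e).eval

/-- `W_e` : the domain of `φ_e`. -/
def Wset (e : ℕ) : Set ℕ := (phi e).Dom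

/-- `e` is a C-index: `φ_e` is total with values in `{0,1}`. -/
def CIndex (e : ℕ) : Prop := ∀ x, phi e x = Part.some 0 ∨ phi e x = Part.some 1

/-- `C_e = {x | φ_e x = 1}`. -/
def Cset (e : ℕ) : Set ℕ := {x | phi e x = Part.some 1}

/-- A language is recursive (decidable). -/
def RecLang (L : Set ℕ) : Prop := ∃ f : ℕ → Bool, Computable f ∧ ∀ x, x ∈ L ↔ f x = true

/-- Texts: total functions `ℕ → ℕ ∪ {#}`; `none` is the pause symbol `#`. -/
abbrev Text := ℕ → Option ℕ

/-- The content of a text: its range minus the pause symbol. -/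
def content (T : Text) : Set ℕ := {x | ∃ n, T n = some x}

/-- The initial segment `T[n] = (T 0, …, T (n-1))`. -/
def initSeg (T : Text) (n : ℕ) : List (Option ℕ) := (List.range n).map T

/-- The (finite) content of the initial segment `T[n]`. -/
def fincontent (T : Text) (n : ℕ) : Finset ℕ := ((initSeg T n).filterMap id).toFinset

/-- A canonical numerical code for a finite set of naturals. -/
def setCode (D : Finset ℕ) : ℕ := Encodable.encode (D.sort (· ≤ ·))

/-- Learners: partial functions on (suitably coded) natural number inputs. -/
abbrev Learner := ℕ →. ℕ

/-- The learner is partial computable. -/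
def PartComputable (h : Learner) : Prop := Nat.Partrec h

/-- The learner is total computable. -/
def TotalComputable (h : Learner) : Prop := Nat.Partrec h ∧ ∀ x, (h x).Dom

/-- Hypothesis sequences (possibly undefined at some points). -/
abbrev HypSeq := ℕ → Part ℕ

/-- Gold-style (full-information) learning: `G(h,T)(i) = h(T[i])`. -/
def Gop (h : Learner) (T : Text) (i : ℕ) : Part ℕ :=
  h (Encodable.encode (initSeg T i))

/-- Partially set-driven learning: `Psd(h,T)(i) = h(content T[i], i)`. -/
def Psdop (h : Learner) (T : Text) (i : ℕ) : Part ℕ :=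
  h (Nat.pair (setCode (fincontent T i)) i)

/-- Set-driven learning: `Sd(h,T)(i) = h(content T[i])`. -/
def Sdop (h : Learner) (T : Text) (i : ℕ) : Part ℕ :=
  h (setCode (fincontent T i))

/-- Iterative learning: the input `none` codes the empty start sequence `ε`,
and `some (e, x)` codes the pair of previous hypothesis `e` and datum `x`. -/
def Itop (h : Learner) (T : Text) : ℕ → Part ℕ
  | 0 => h (Encodable.encode (none : Option (ℕ × Option ℕ)))
  | i + 1 => (Itop h T i).bind fun e =>
      h (Encodable.encode (some (e, T i) : Option (ℕ × Option ℕ)))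

/-- Transductive learning: the learner receives the single (coded) datum
`T i`; the output `0` codes the distinguished symbol `?`, and the output
`e + 1` codes the hypothesis `e`.  The value `?` of the hypothesis sequence
is represented by `Part.none`. -/
def Tdop (h : Learner) (T : Text) : ℕ → Part ℕ
  | 0 => Part.none
  | i + 1 => (h (Encodable.encode (T i))).bind fun v =>
      match v with
      | 0 => Tdop h T i
      | e + 1 => Part.some e

/-- `Ex_C`: syntactic convergence to a single correct C-index. -/
def ExC (p : HypSeq) (T : Text) : Prop :=
  ∃ n₀, (∀ n, n₀ ≤ n → p n = p n₀) ∧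
    ∃ e, p n₀ = Part.some e ∧ CIndex e ∧ Cset e = content T

/-- `Ex_W`: syntactic convergence to a single correct W-index. -/
def ExW (p : HypSeq) (T : Text) : Prop :=
  ∃ n₀, (∀ n, n₀ ≤ n → p n = p n₀) ∧
    ∃ e, p n₀ = Part.some e ∧ Wset e = content T

/-- `Bc_C`: semantic convergence to correct C-indices. -/
def BcC (p : HypSeq) (T : Text) : Prop :=
  ∃ n₀, ∀ n, n₀ ≤ n → ∃ e, p n = Part.some e ∧ CIndex e ∧ Cset e = content T

/-- `Bc_W`: semantic convergence to correct W-indices. -/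
def BcW (p : HypSeq) (T : Text) : Prop :=
  ∃ n₀, ∀ n, n₀ ≤ n → ∃ e, p n = Part.some e ∧ Wset e = content T

/-- `CInd`: every hypothesis output is a C-index. -/
def CIndRes (p : HypSeq) (_T : Text) : Prop :=
  ∀ i e, p i = Part.some e → CIndex e

/-- `T`: the always-true restriction. -/
def TrueRes (_p : HypSeq) (_T : Text) : Prop := True

abbrev InteractionOp := Learner → Text → HypSeq
abbrev Restriction := HypSeq → Text → Prop

/-- Conjunction of restrictions. -/
def andRes (δ δ' : Restriction) : Restriction := fun p T => δ p T ∧ δ' p T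

/-- `h` `Txtβδ`-learns `L`: on every text for `L` the restriction `δ` holds. -/
def Learns (β : InteractionOp) (δ : Restriction) (h : Learner) (L : Set ℕ) : Prop :=
  ∀ T : Text, content T = L → δ (β h T) T

/-- The restriction `α` holds for `h` on all texts whatsoever. -/
def OnAllTexts (β : InteractionOp) (α : Restriction) (h : Learner) : Prop :=
  ∀ T : Text, α (β h T) T

/-- A class of recursive languages. -/
def IsRecClass (ℒ : Set (Set ℕ)) : Prop := ∀ L ∈ ℒ, RecLang L

/-- `[𝒞Txtβδ]_REC`: classes of recursive languages learnable by some
learner from `C` under interaction operator `β` and restriction `δ`. -/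
def LearnableREC (C : Learner → Prop) (β : InteractionOp) (δ : Restriction) :
    Set (Set (Set ℕ)) :=
  {ℒ | IsRecClass ℒ ∧ ∃ h, C h ∧ ∀ L ∈ ℒ, Learns β δ h L}

/-- `[τ(α)𝒞Txtβδ]_REC`: as above, where additionally `α` must hold on
arbitrary texts. -/
def TauLearnableREC (C : Learner → Prop) (α : Restriction) (β : InteractionOp)
    (δ : Restriction) : Set (Set (Set ℕ)) :=
  {ℒ | IsRecClass ℒ ∧ ∃ h, C h ∧ OnAllTexts β α h ∧ ∀ L ∈ ℒ, Learns β δ h L}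

/-! A transductive learner sees one datum at a time, so whatever it answers on `⟨e, 0⟩` it answers
again each time `⟨e, 0⟩` recurs in the text. Let `L_e = {⟨e, 0⟩}` if `φ_e` answers `?` on
`⟨e, 0⟩`; if it answers a hypothesis `c`, let `L_e = {⟨e, 0⟩, z}` with `z ∈ {⟨e, 1⟩, ⟨e, 2⟩}`
chosen so that `C_c ≠ L_e`. A total `φ_e` fails on `L_e`: on the constant text it never
conjectures, and on a text repeating `⟨e, 0⟩` it must converge to the wrong `c`. A partial
learner learns every `L_e`: on `⟨e, b⟩` it conjectures `{⟨e, 0⟩, ⟨e, b⟩}`, except that on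
`⟨e, 0⟩` it waits for the answer of `φ_e` there and says `?` if that answer is a hypothesis. -/

open Nat.Partrec (Code)

lemma encode_some_nat (x : ℕ) : Encodable.encode (some x) = x + 1 := by
  rw [Encodable.encode_some, Encodable.encode_nat]

section Transductive

variable {h : Learner} {T : Text} {n : ℕ}

lemma tdop_succ_of_eq_zero (hn : h (Encodable.encode (T n)) = Part.some 0) :
    Tdop h T (n + 1) = Tdop h T n := by
  rw [Tdop, hn, Part.bind_some]

lemma tdop_succ_of_eq_succ {e : ℕ} (hn : h (Encodable.encode (T n)) = Part.some (e + 1)) :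
    Tdop h T (n + 1) = Part.some e := by
  rw [Tdop, hn, Part.bind_some]

lemma tdop_eq_none_of_forall_eq_zero (hT : ∀ n, h (Encodable.encode (T n)) = Part.some 0)
    (n : ℕ) : Tdop h T n = Part.none := by
  induction n with
  | zero => rfl
  | succ n ih => rw [tdop_succ_of_eq_zero (hT n), ih]

lemma tdop_eq_none_or_eq_some {E : ℕ} (hT : ∀ n, h (Encodable.encode (T n)) = Part.some 0 ∨
    h (Encodable.encode (T n)) = Part.some (E + 1)) (n : ℕ) :
    Tdop h T n = Part.none ∨ Tdop h T n = Part.some E := by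
  induction n with
  | zero => exact .inl rfl
  | succ n ih =>
    rcases hT n with h0 | hE
    · rwa [tdop_succ_of_eq_zero h0]
    · exact .inr (tdop_succ_of_eq_succ hE)

lemma tdop_eq_some_of_lt {E m : ℕ} (hT : ∀ n, h (Encodable.encode (T n)) = Part.some 0 ∨
    h (Encodable.encode (T n)) = Part.some (E + 1))
    (hm : h (Encodable.encode (T m)) = Part.some (E + 1)) :
    ∀ n, m < n → Tdop h T n = Part.some E
  | n + 1, hn => by
    rcases (Nat.lt_succ_iff.1 hn).eq_or_lt with rfl | hlt
    · exact tdop_succ_of_eq_succ hm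
    · rcases hT n with h0 | hE
      · rw [tdop_succ_of_eq_zero h0, tdop_eq_some_of_lt hT hm n hlt]
      · exact tdop_succ_of_eq_succ hE

end Transductive

lemma learns_of_outputs {h : Learner} {L : Set ℕ} {E d : ℕ} (hE : CIndex E)
    (hEL : Cset E = L) (hpause : h 0 = Part.some 0)
    (hL : ∀ x ∈ L, h (x + 1) = Part.some 0 ∨ h (x + 1) = Part.some (E + 1))
    (hd : d ∈ L) (hdE : h (d + 1) = Part.some (E + 1)) :
    Learns Tdop (andRes CIndRes ExC) h L := by
  intro T hT
  have hout : ∀ n, h (Encodable.encode (T n)) = Part.some 0 ∨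
      h (Encodable.encode (T n)) = Part.some (E + 1) := by
    intro n
    cases hn : T n with
    | none => exact .inl hpause
    | some x => rw [encode_some_nat]; exact hL x (hT ▸ ⟨n, hn⟩)
  obtain ⟨m, hm⟩ : d ∈ content T := hT ▸ hd
  have hmE : h (Encodable.encode (T m)) = Part.some (E + 1) := by rwa [hm, encode_some_nat]
  have hstab := tdop_eq_some_of_lt hout hmE
  refine ⟨fun i e hi => ?_, m + 1, fun n hn => ?_, E, hstab _ m.lt_succ_self, hE,
    hEL.trans hT.symm⟩
  · rcases tdop_eq_none_or_eq_some hout i with h0 | h1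
    · exact absurd (h0 ▸ hi) (Part.none_ne_some e)
    · exact Part.some_inj.1 (h1 ▸ hi) ▸ hE
  · rw [hstab n hn, hstab _ m.lt_succ_self]

lemma ExC.cIndex_and_cset_eq_of_frequently {p : HypSeq} {T : Text} {c : ℕ} (hp : ExC p T)
    (hc : ∀ m, ∃ n, m ≤ n ∧ p n = Part.some c) : CIndex c ∧ Cset c = content T := by
  obtain ⟨n₀, hstab, e, he, hCI, hCs⟩ := hp
  obtain ⟨n, hn, hpn⟩ := hc n₀
  obtain rfl : c = e := Part.some_inj.1 (hpn.symm.trans ((hstab n hn).trans he))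
  exact ⟨hCI, hCs⟩

open Classical in
noncomputable def textRepeating (L : Set ℕ) (x : ℕ) : Text := fun n =>
  if n % 2 = 1 ∧ n / 2 ∈ L then some (n / 2) else some x

lemma textRepeating_two_mul (L : Set ℕ) (x k : ℕ) : textRepeating L x (2 * k) = some x := by
  simp [textRepeating]

lemma content_textRepeating {L : Set ℕ} {x : ℕ} (hx : x ∈ L) :
    content (textRepeating L x) = L := by
  ext y
  constructor
  · rintro ⟨n, hn⟩
    unfold textRepeating at hn
    split_ifs at hn with hL
    · exact Option.some_inj.1 hn ▸ hL.2
    · exact Option.some_inj.1 hn ▸ hx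
  · intro hy
    refine ⟨2 * y + 1, ?_⟩
    simp [textRepeating, Nat.add_mod, Nat.add_div, hy]

lemma Learns.cIndex_and_cset_eq_of_output {h : Learner} {L : Set ℕ} {x c : ℕ}
    (hL : Learns Tdop ExC h L) (hx : x ∈ L) (hc : h (x + 1) = Part.some (c + 1)) :
    CIndex c ∧ Cset c = L := by
  have hcontent := content_textRepeating hx
  refine hcontent ▸ (hL _ hcontent).cIndex_and_cset_eq_of_frequently fun m =>
    ⟨2 * m + 1, by omega, tdop_succ_of_eq_succ ?_⟩
  rwa [textRepeating_two_mul, encode_some_nat]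

lemma not_learns_singleton_of_output_zero {h : Learner} {x : ℕ}
    (hx : h (x + 1) = Part.some 0) : ¬ Learns Tdop ExC h {x} := by
  intro hL
  have hcontent : content (fun _ => some x) = {x} := by
    ext y
    simp [content, eq_comm]
  obtain ⟨n₀, -, e, he, -⟩ := hL _ hcontent
  rw [tdop_eq_none_of_forall_eq_zero (fun _ => by rwa [encode_some_nat])] at he
  exact Part.none_ne_some e he

lemma partrec₂_phi : Partrec₂ phi :=
  Code.eval_part.comp ((Computable.ofNat Code).comp .fst) .snd

lemma exists_index_of_partrec {f : ℕ →. ℕ} (hf : Nat.Partrec f) : ∃ e, phi e = f := by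
  obtain ⟨c, rfl⟩ := Code.exists_code.1 hf
  exact ⟨Encodable.encode c, by rw [phi, Denumerable.ofNat_encode]⟩

/-- The s-m-n theorem for `phi`. -/
lemma exists_primrec_phi_eq {f : ℕ → ℕ → ℕ} (hf : Primrec₂ f) :
    ∃ g : ℕ → ℕ, Primrec g ∧ ∀ a x, phi (g a) x = Part.some (f a x) := by
  obtain ⟨c, hc⟩ := Code.exists_code.1 (Partrec.nat_iff.1
    (hf.comp (Primrec.fst.comp Primrec.unpair) (Primrec.snd.comp Primrec.unpair)).to_comp.partrec)
  refine ⟨fun a => Encodable.encode (c.curry a),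
    Primrec.encode.comp (Code.primrec₂_curry.comp (.const c) .id), fun a x => ?_⟩
  rw [phi, Denumerable.ofNat_encode, Code.eval_curry, hc]
  simp

lemma recLang_pair (u v : ℕ) : RecLang {u, v} :=
  ⟨fun x => decide (x = u ∨ x = v),
    (PrimrecPred.or (Primrec.eq.comp .id (.const u))
      (Primrec.eq.comp .id (.const v))).decide.to_comp,
    fun x => by simp⟩

lemma primrec₂_indicator_pair :
    Primrec₂ fun p x : ℕ => if x = p.unpair.1 ∨ x = p.unpair.2 then 1 else 0 :=
  Primrec.ite
    (PrimrecPred.or (Primrec.eq.comp .snd (Primrec.fst.comp (Primrec.unpair.comp .fst)))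
      (Primrec.eq.comp .snd (Primrec.snd.comp (Primrec.unpair.comp .fst))))
    (.const 1) (.const 0)

noncomputable def pairIdx (u v : ℕ) : ℕ :=
  (exists_primrec_phi_eq primrec₂_indicator_pair).choose (Nat.pair u v)

lemma primrec₂_pairIdx : Primrec₂ pairIdx :=
  (exists_primrec_phi_eq primrec₂_indicator_pair).choose_spec.1.comp Primrec₂.natPair

lemma phi_pairIdx (u v x : ℕ) :
    phi (pairIdx u v) x = Part.some (if x = u ∨ x = v then 1 else 0) := by
  rw [pairIdx, (exists_primrec_phi_eq primrec₂_indicator_pair).choose_spec.2, Nat.unpair_pair]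

lemma cIndex_pairIdx (u v : ℕ) : CIndex (pairIdx u v) := fun x => by
  rw [phi_pairIdx]
  split_ifs <;> simp

lemma cset_pairIdx (u v : ℕ) : Cset (pairIdx u v) = {u, v} := by
  ext x
  simp only [Cset, Set.mem_ofPred_eq, phi_pairIdx, Part.some_inj]
  split_ifs with hx <;> simpa using hx

abbrev datum (e b : ℕ) : ℕ := Nat.pair e b

/-- The answer of `φ_e`, as a transductive learner, on the datum `⟨e, 0⟩`. -/
def probe (e : ℕ) : Part ℕ := phi e (datum e 0 + 1)

lemma partrec_probe : Partrec probe :=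
  partrec₂_phi.comp .id (Primrec.succ.comp (Primrec₂.natPair.comp .id (.const 0))).to_comp

open Classical in
/-- The second element of `L_e` when `probe e = α`. -/
noncomputable def partner (e : ℕ) : ℕ → ℕ
  | 0 => datum e 0
  | c + 1 => if datum e 1 ∈ Cset c then datum e 2 else datum e 1

lemma cset_ne_pair_partner (e c : ℕ) : Cset c ≠ {datum e 0, partner e (c + 1)} := by
  intro h
  have h1 := Set.ext_iff.1 h (datum e 1)
  by_cases hc : datum e 1 ∈ Cset c
  · simp [partner, hc, Nat.pair_eq_pair] at h1
  · simp [partner, hc] at h1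

def diagClass : Set (Set ℕ) :=
  {L | ∃ e α, probe e = Part.some α ∧ L = {datum e 0, partner e α}}

lemma isRecClass_diagClass : IsRecClass diagClass := by
  rintro L ⟨e, α, -, rfl⟩
  exact recLang_pair _ _

/-- The input `0` codes the pause `#`, and the output `0` codes `?`. -/
noncomputable def diagLearner : Learner
  | 0 => Part.some 0
  | x + 1 => (probe x.unpair.1).map fun α =>
      if x.unpair.2 = 0 ∧ α ≠ 0 then 0 else pairIdx (datum x.unpair.1 0) x + 1

lemma partrec_diagLearner : Nat.Partrec diagLearner := by
  refine Partrec.nat_iff.1 ((Partrec.nat_casesOn_right (h := fun _ x => (probe x.unpair.1).map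
    fun α => if x.unpair.2 = 0 ∧ α ≠ 0 then 0 else pairIdx (datum x.unpair.1 0) x + 1)
    .id (.const 0) ?_).of_eq fun z => by cases z <;> rfl)
  refine Partrec.map (partrec_probe.comp (Primrec.fst.comp (Primrec.unpair.comp .snd)).to_comp) ?_
  have hx : Primrec fun q : (ℕ × ℕ) × ℕ => q.1.2 := Primrec.snd.comp .fst
  exact (Primrec.ite
    ((Primrec.eq.comp (Primrec.snd.comp (Primrec.unpair.comp hx)) (.const 0)).and
      (Primrec.eq.comp .snd (.const 0)).not)
    (.const 0)
    (Primrec.succ.comp (primrec₂_pairIdx.comp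
      (Primrec₂.natPair.comp (Primrec.fst.comp (Primrec.unpair.comp hx)) (.const 0)) hx))).to_comp

lemma diagLearner_datum {e α : ℕ} (hα : probe e = Part.some α) (b : ℕ) :
    diagLearner (datum e b + 1) =
      Part.some (if b = 0 ∧ α ≠ 0 then 0 else pairIdx (datum e 0) (datum e b) + 1) := by
  simp [diagLearner, hα]

lemma diagLearner_partner {e α : ℕ} (hα : probe e = Part.some α) :
    diagLearner (partner e α + 1) = Part.some (pairIdx (datum e 0) (partner e α) + 1) := by
  cases α with
  | zero => simp [partner, diagLearner_datum hα]
  | succ c => simp only [partner]; split_ifs <;> simp [diagLearner_datum hα]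

lemma diagLearner_learns {e α : ℕ} (hα : probe e = Part.some α) :
    Learns Tdop (andRes CIndRes ExC) diagLearner {datum e 0, partner e α} := by
  have hpartner := diagLearner_partner hα
  refine learns_of_outputs (cIndex_pairIdx _ _) (cset_pairIdx _ _) rfl ?_ (.inr rfl) hpartner
  rintro x (rfl | rfl)
  · rw [diagLearner_datum hα]
    split_ifs with h
    · exact .inl rfl
    · obtain rfl : α = 0 := by simpa using h
      exact .inr rfl
  · exact .inr hpartner

lemma diagClass_mem_learnableREC_partComputable :
    diagClass ∈ LearnableREC PartComputable Tdop (andRes CIndRes ExC) := by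
  refine ⟨isRecClass_diagClass, diagLearner, partrec_diagLearner, ?_⟩
  rintro L ⟨e, α, hα, rfl⟩
  exact diagLearner_learns hα

lemma diagClass_not_mem_learnableREC_totalComputable :
    diagClass ∉ LearnableREC TotalComputable Tdop (andRes CIndRes ExC) := by
  rintro ⟨-, h, ⟨hpc, htot⟩, hlearn⟩
  obtain ⟨e, rfl⟩ := exists_index_of_partrec hpc
  obtain ⟨α, hα⟩ : ∃ α, probe e = Part.some α := ⟨_, Part.eq_some_iff.2 (Part.get_mem (htot _))⟩
  have hL : Learns Tdop ExC (phi e) {datum e 0, partner e α} := fun T hT =>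
    (hlearn _ ⟨e, α, hα, rfl⟩ T hT).2
  cases α with
  | zero =>
    exact not_learns_singleton_of_output_zero hα (by rwa [partner, Set.pair_eq_singleton] at hL)
  | succ c =>
    exact cset_ne_pair_partner e c (hL.cIndex_and_cset_eq_of_output (.inl rfl) hα).2

/-- `[ℛTxtTdCIndEx_C]_REC ⊊ [TxtTdCIndEx_C]_REC`. -/
theorem total_td_cind_ssubset :
    LearnableREC TotalComputable Tdop (andRes CIndRes ExC) ⊂
      LearnableREC PartComputable Tdop (andRes CIndRes ExC) :=
  ssubset_iff_subset_not_subset.2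
    ⟨fun _ ⟨hrec, h, ⟨hpc, _⟩, hl⟩ => ⟨hrec, h, hpc, hl⟩,
      fun hsub => diagClass_not_mem_learnableREC_totalComputable
        (hsub diagClass_mem_learnableREC_partComputable)⟩

end InductiveInference
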